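/- arXiv:2507.19453 — 5 statements merged into one kernel-verified Lean document; each statement's English description precedes it below -/
import Mathlib

section
/- Let μ : B(H) → ℂ be a linear functional such that μ(a^* a) is a nonnegative real number for every a in the unital subalgebra of B(H) generated by L_1,…,L_d. Define K_μ(σ,τ) := μ((L^τ)^* L^σ) for σ,τ ∈ F_d^+. Then K_μ is a multi-Toeplitz kernel, i.e.: (i) K_μ(τσ, τσ') = K_μ(σ,σ') for all τ,σ,σ' ∈ F_d^+; (ii) K_μ(σ,τ) = 0 whenever there is no α ∈ F_d^+ with σ = τα or τ = σα; (iii) for every finite subset S ⊆ F_d^+ the matrix [K_μ(σ,τ)]_{σ,τ∈S} is positive semidefinite. -/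
open scoped ComplexOrder

/-- `L^σ = L_{σ_1} ⋯ L_{σ_n}` for a word `σ` over the alphabet of `d` generators. -/
noncomputable def Lword {d : ℕ} {H : Type*} [NormedAddCommGroup H] [InnerProductSpace ℂ H]
    (L : Fin d → H →L[ℂ] H) (σ : List (Fin d)) : H →L[ℂ] H :=
  (σ.map L).prod

/-- The kernel `K_μ(σ, τ) := μ((L^τ)^* L^σ)` associated to a functional `μ` on `B(H)`. -/
noncomputable def Kker {d : ℕ} {H : Type*} [NormedAddCommGroup H] [InnerProductSpace ℂ H]
    [CompleteSpace H] (μ : (H →L[ℂ] H) →ₗ[ℂ] ℂ) (L : Fin d → H →L[ℂ] H)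
    (σ τ : List (Fin d)) : ℂ :=
  μ (star (Lword L τ) * Lword L σ)

/-!
Since `L` is a row isometry, `(L^τ)^* L^τ = 1` gives the shift invariance, and two incomparable
words split as `α j σ₁` and `α k τ₁` with `j ≠ k`, so `(L^τ)^* L^σ` contains the factor
`L_k^* L_j = 0`. Positivity of the kernel is positivity of `μ` on `a^* a` with
`a = ∑ conj(x_σ) L^σ`, and the kernel is Hermitian by polarization.
-/

section PositiveFunctional

variable {R : Type*} [Ring R] [StarRing R] [Algebra ℂ R] [StarModule ℂ R]
  {A : Submodule ℂ R} {μ : R →ₗ[ℂ] ℂ}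

/-- Polarization: `μ((a + b)^*(a + b))` and `μ((a + i b)^*(a + i b))` are both real. -/
theorem map_star_mul_eq_star_map_star_mul (hμ : ∀ a ∈ A, 0 ≤ μ (star a * a)) {a b : R}
    (ha : a ∈ A) (hb : b ∈ A) : μ (star a * b) = star (μ (star b * a)) := by
  have him : ∀ c ∈ A, (μ (star c * c)).im = 0 := fun c hc =>
    (Complex.nonneg_iff.mp (hμ c hc)).2.symm
  have hsum : μ (star (a + b) * (a + b))
      = μ (star a * a) + μ (star b * b) + (μ (star a * b) + μ (star b * a)) := by
    simp only [star_add, add_mul, mul_add, map_add]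
    ring
  have hsumI : μ (star (a + Complex.I • b) * (a + Complex.I • b))
      = μ (star a * a) + μ (star b * b) + Complex.I * (μ (star a * b) - μ (star b * a)) := by
    simp only [star_add, star_smul, add_mul, mul_add, smul_mul_assoc, mul_smul_comm, map_add,
      map_smul, smul_eq_mul, Complex.star_def, Complex.conj_I]
    linear_combination (-μ (star b * b)) * Complex.I_mul_I
  have h₁ := him _ (A.add_mem ha hb)
  have h₂ := him _ (A.add_mem ha (A.smul_mem Complex.I hb))
  rw [hsum, Complex.add_im, Complex.add_im, him a ha, him b hb] at h₁
  rw [hsumI, Complex.add_im, Complex.add_im, him a ha, him b hb, Complex.I_mul_im] at h₂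
  apply Complex.ext <;> simp only [Complex.star_def, Complex.conj_re, Complex.conj_im] <;>
    simp only [Complex.add_im, Complex.sub_re] at h₁ h₂ <;> linarith

theorem posSemidef_of_map_star_mul_self_nonneg (hμ : ∀ a ∈ A, 0 ≤ μ (star a * a))
    {ι : Type*} (v : ι → R) (hv : ∀ i, v i ∈ A) :
    Matrix.PosSemidef (Matrix.of fun i j => μ (star (v j) * v i)) := by
  refine ⟨?_, fun x => ?_⟩
  · ext i j
    exact (map_star_mul_eq_star_map_star_mul hμ (hv j) (hv i)).symm
  · have hb : (x.sum fun i xi => star xi • v i) ∈ A :=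
      AddSubmonoidClass.finsuppSum_mem _ _ _ fun i _ => A.smul_mem _ (hv i)
    convert hμ _ hb using 1
    simp only [Finsupp.sum, star_sum, star_smul, Finset.sum_mul, Finset.mul_sum, map_sum,
      smul_mul_smul_comm, map_smul, smul_eq_mul, Matrix.of_apply, star_star]
    refine Finset.sum_congr rfl fun i _ => Finset.sum_congr rfl fun j _ => ?_
    ring

end PositiveFunctional

section RowIsometry

variable {d : ℕ} {H : Type*} [NormedAddCommGroup H] [InnerProductSpace ℂ H] (L : Fin d → H →L[ℂ] H)

theorem Lword_cons (j : Fin d) (σ : List (Fin d)) : Lword L (j :: σ) = L j * Lword L σ := by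
  simp [Lword]

theorem Lword_append (σ τ : List (Fin d)) : Lword L (σ ++ τ) = Lword L σ * Lword L τ := by
  simp [Lword]

theorem Lword_mem_adjoin (σ : List (Fin d)) : Lword L σ ∈ Algebra.adjoin ℂ (Set.range L) :=
  Subalgebra.list_prod_mem _ fun _ hx => by
    obtain ⟨j, -, rfl⟩ := List.mem_map.mp hx
    exact Algebra.subset_adjoin ⟨j, rfl⟩

variable [CompleteSpace H] {L}

theorem star_Lword_mul_self (hL : ∀ j, star (L j) * L j = 1) (σ : List (Fin d)) :
    star (Lword L σ) * Lword L σ = 1 := by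
  induction σ with
  | nil => simp [Lword]
  | cons j σ ih => rw [Lword_cons, star_mul, mul_assoc, ← mul_assoc (star (L j)), hL, one_mul, ih]

theorem star_Lword_append_mul_Lword_append (hL : ∀ j, star (L j) * L j = 1)
    (τ σ σ' : List (Fin d)) :
    star (Lword L (τ ++ σ)) * Lword L (τ ++ σ') = star (Lword L σ) * Lword L σ' := by
  rw [Lword_append, Lword_append, star_mul, mul_assoc, ← mul_assoc (star (Lword L τ)),
    star_Lword_mul_self hL, one_mul]

theorem star_Lword_mul_Lword_eq_zero
    (hL : ∀ j k, star (L j) * L k = if j = k then (1 : H →L[ℂ] H) else 0) :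
    ∀ {σ τ : List (Fin d)}, ¬ τ <+: σ → ¬ σ <+: τ → star (Lword L τ) * Lword L σ = 0
  | [], τ, _, hστ => absurd τ.nil_prefix hστ
  | _ :: _, [], hτσ, _ => absurd List.nil_prefix hτσ
  | j :: σ, k :: τ, hτσ, hστ => by
    by_cases hkj : k = j
    · subst hkj
      rw [← List.singleton_append, ← List.singleton_append (l := σ),
        star_Lword_append_mul_Lword_append (fun j => by simpa using hL j j)]
      exact star_Lword_mul_Lword_eq_zero hL (fun h => hτσ (List.cons_prefix_cons.mpr ⟨rfl, h⟩))
        fun h => hστ (List.cons_prefix_cons.mpr ⟨rfl, h⟩)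
    · rw [Lword_cons, Lword_cons, star_mul, mul_assoc, ← mul_assoc (star (L k)), hL k j,
        if_neg hkj, zero_mul, mul_zero]

end RowIsometry

theorem Kker_isMultiToeplitz_general {d : ℕ}
    {H : Type*} [NormedAddCommGroup H] [InnerProductSpace ℂ H] [CompleteSpace H]
    (L : Fin d → H →L[ℂ] H)
    (hL : ∀ j k : Fin d, star (L j) * L k = if j = k then (1 : H →L[ℂ] H) else 0)
    (μ : (H →L[ℂ] H) →ₗ[ℂ] ℂ)
    (hμ : ∀ a ∈ Algebra.adjoin ℂ (Set.range L), 0 ≤ μ (star a * a)) :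
    (∀ τ σ σ' : List (Fin d), Kker μ L (τ ++ σ) (τ ++ σ') = Kker μ L σ σ') ∧
    (∀ σ τ : List (Fin d), (¬ ∃ α : List (Fin d), σ = τ ++ α ∨ τ = σ ++ α) →
      Kker μ L σ τ = 0) ∧
    (∀ S : Finset (List (Fin d)),
      Matrix.PosSemidef (Matrix.of fun σ τ : S => Kker μ L σ.1 τ.1)) := by
  have hiso : ∀ j, star (L j) * L j = 1 := fun j => by simpa using hL j j
  refine ⟨fun τ σ σ' => ?_, fun σ τ hinc => ?_, fun S => ?_⟩
  · rw [Kker, Kker, star_Lword_append_mul_Lword_append hiso]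
  · have hτσ : ¬ τ <+: σ := fun ⟨α, hα⟩ => hinc ⟨α, Or.inl hα.symm⟩
    have hστ : ¬ σ <+: τ := fun ⟨α, hα⟩ => hinc ⟨α, Or.inr hα.symm⟩
    rw [Kker, star_Lword_mul_Lword_eq_zero hL hτσ hστ, map_zero]
  · exact posSemidef_of_map_star_mul_self_nonneg
      (A := (Algebra.adjoin ℂ (Set.range L)).toSubmodule) hμ
      (fun σ : S => Lword L σ.1) fun σ => Lword_mem_adjoin L σ.1

/-- if `μ : B(H) → ℂ` is linear and `μ(a^* a) ≥ 0` for every `a` in the unital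
subalgebra generated by the row isometry `L_1, …, L_d`, then `K_μ(σ,τ) := μ((L^τ)^* L^σ)` is a
multi-Toeplitz kernel: (i) `K_μ(τσ, τσ') = K_μ(σ, σ')`; (ii) `K_μ(σ, τ) = 0` when `σ, τ` are not
comparable; (iii) every finite principal submatrix of `K_μ` is positive semidefinite. -/
theorem Kker_isMultiToeplitz {d : ℕ} (hd : 1 ≤ d)
    {H : Type*} [NormedAddCommGroup H] [InnerProductSpace ℂ H] [CompleteSpace H]
    (L : Fin d → H →L[ℂ] H)
    (hL : ∀ j k : Fin d, star (L j) * L k = if j = k then (1 : H →L[ℂ] H) else 0)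
    (μ : (H →L[ℂ] H) →ₗ[ℂ] ℂ)
    (hμ : ∀ a ∈ Algebra.adjoin ℂ (Set.range L), 0 ≤ μ (star a * a)) :
    (∀ τ σ σ' : List (Fin d), Kker μ L (τ ++ σ) (τ ++ σ') = Kker μ L σ σ') ∧
    (∀ σ τ : List (Fin d), (¬ ∃ α : List (Fin d), σ = τ ++ α ∨ τ = σ ++ α) →
      Kker μ L σ τ = 0) ∧
    (∀ S : Finset (List (Fin d)),
      Matrix.PosSemidef (Matrix.of fun σ τ : S => Kker μ L σ.1 τ.1)) :=
  Kker_isMultiToeplitz_general L hL μ hμ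
end

section
/- Given a Szegő system, for every σ ∈ F_d^+ one has φ^#_σ(0) = ∏_{τ ⪯ σ} d_τ^{−1}, where the (finite) product is over all words τ ∈ F_d^+ with τ ⪯ σ in the shortlex order. -/
/-!
The monomial `Z_k φ_σ` has no constant term, so evaluating the recurrence for `φ^#` at `0`
gives `φ^#_{kσ}(0) = d_{kσ}⁻¹ φ^#_{kσ-1}(0)`. Running through the words in shortlex order, whose
least element is `∅` with `φ^#_∅(0) = 1 = d_∅⁻¹`, telescopes this into the product.
-/

open scoped BigOperators

/-- The shortlex (length-then-lexicographic) order on words in `F_d^+`. -/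
def ShortlexLE {d : ℕ} (σ τ : List (Fin d)) : Prop :=
  σ.length < τ.length ∨ (σ.length = τ.length ∧ (σ = τ ∨ List.Lex (· < ·) σ τ))

/-- The defect `d_σ := √(1 - |γ_σ|²)`. -/
noncomputable def defect {d : ℕ} (γ : List (Fin d) → ℂ) (σ : List (Fin d)) : ℝ :=
  Real.sqrt (1 - ‖γ σ‖ ^ 2)

/-- A Szegő system: Verblunsky coefficients `γ : F_d^+ → ℂ` with `γ_∅ = 0`, `|γ_σ| < 1`,
together with families of noncommutative polynomials `φ, φr (= φ^#)` with `φ_∅ = φ^#_∅ = 1`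
satisfying the Szegő recurrences, where `e : ℕ ≃ F_d^+` is the shortlex order isomorphism and
`τ - 1 := e (e⁻¹ τ - 1)` is the immediate shortlex predecessor. -/
structure SzegoSystem (d : ℕ) where
  /-- the shortlex enumeration of `F_d^+` -/
  e : ℕ ≃ List (Fin d)
  /-- `e` is an order isomorphism onto the shortlex order -/
  he : ∀ m n : ℕ, m ≤ n ↔ ShortlexLE (e m) (e n)
  /-- the Verblunsky coefficients -/
  γ : List (Fin d) → ℂ
  hγ0 : γ [] = 0
  hγlt : ∀ σ : List (Fin d), ‖γ σ‖ < 1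
  /-- the orthonormal polynomials -/
  φ : List (Fin d) → FreeAlgebra ℂ (Fin d)
  /-- the reverse polynomials `φ^#` -/
  φr : List (Fin d) → FreeAlgebra ℂ (Fin d)
  hφ0 : φ [] = 1
  hφr0 : φr [] = 1
  recφ : ∀ (k : Fin d) (σ : List (Fin d)),
    φ (k :: σ) = (((defect γ (k :: σ) : ℝ) : ℂ))⁻¹ •
      (FreeAlgebra.ι ℂ k * φ σ - γ (k :: σ) • φr (e (e.symm (k :: σ) - 1)))
  recφr : ∀ (k : Fin d) (σ : List (Fin d)),
    φr (k :: σ) = (((defect γ (k :: σ) : ℝ) : ℂ))⁻¹ •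
      ((-(starRingEnd ℂ (γ (k :: σ)))) • (FreeAlgebra.ι ℂ k * φ σ) +
        φr (e (e.symm (k :: σ) - 1)))

/-- Evaluation of a noncommutative polynomial at `0` (the constant coefficient). -/
noncomputable def evalZero (d : ℕ) : FreeAlgebra ℂ (Fin d) →ₐ[ℂ] ℂ :=
  FreeAlgebra.lift ℂ (fun _ : Fin d => (0 : ℂ))

/-- The shortlex-largest word of length `n`: the largest generator repeated `n` times. -/
def sigmaWord (d : ℕ) (hd : 1 ≤ d) (n : ℕ) : List (Fin d) :=
  List.replicate n (⟨d - 1, by omega⟩ : Fin d)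

theorem shortlexLE_nil {d : ℕ} (τ : List (Fin d)) : ShortlexLE [] τ := by
  rcases τ with _ | ⟨a, τ⟩
  · exact Or.inr ⟨rfl, Or.inl rfl⟩
  · exact Or.inl (Nat.succ_pos _)

theorem defect_eq_one_of_eq_zero {d : ℕ} {γ : List (Fin d) → ℂ} {σ : List (Fin d)}
    (h : γ σ = 0) : defect γ σ = 1 := by
  simp [defect, h]

@[simp]
theorem evalZero_ι (d : ℕ) (k : Fin d) : evalZero d (FreeAlgebra.ι ℂ k) = 0 := by
  simp [evalZero]

namespace SzegoSystem

variable {d : ℕ} (S : SzegoSystem d)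

theorem e_zero : S.e 0 = [] := by
  have h : S.e.symm [] ≤ 0 := by
    rw [S.he, Equiv.apply_symm_apply]
    exact shortlexLE_nil _
  rw [← Nat.le_zero.mp h, Equiv.apply_symm_apply]

theorem evalZero_φr_cons (k : Fin d) (σ : List (Fin d)) :
    evalZero d (S.φr (k :: σ)) = ((defect S.γ (k :: σ) : ℝ) : ℂ)⁻¹ *
      evalZero d (S.φr (S.e (S.e.symm (k :: σ) - 1))) := by
  rw [S.recφr, map_smul, map_add, map_smul, map_mul, evalZero_ι, zero_mul, smul_zero,
    zero_add, smul_eq_mul]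

theorem evalZero_φr_e_succ (n : ℕ) :
    evalZero d (S.φr (S.e (n + 1))) =
      ((defect S.γ (S.e (n + 1)) : ℝ) : ℂ)⁻¹ * evalZero d (S.φr (S.e n)) := by
  obtain ⟨k, σ, hkσ⟩ : ∃ k σ, S.e (n + 1) = k :: σ := by
    refine List.exists_cons_of_ne_nil fun h => ?_
    exact n.succ_ne_zero (S.e.injective (h.trans S.e_zero.symm))
  rw [hkσ, S.evalZero_φr_cons, ← hkσ, Equiv.symm_apply_apply, Nat.add_sub_cancel]

theorem evalZero_φr_e (n : ℕ) :
    evalZero d (S.φr (S.e n)) =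
      ∏ j ∈ Finset.range (n + 1), ((defect S.γ (S.e j) : ℝ) : ℂ)⁻¹ := by
  induction n with
  | zero =>
    simp [S.e_zero, S.hφr0, defect_eq_one_of_eq_zero S.hγ0]
  | succ n ih =>
    rw [S.evalZero_φr_e_succ, ih, Finset.prod_range_succ _ (n + 1), mul_comm]

end SzegoSystem

theorem reverse_poly_at_zero_general {d : ℕ} (S : SzegoSystem d) (σ : List (Fin d)) :
    evalZero d (S.φr σ) =
      ∏ j ∈ Finset.range (S.e.symm σ + 1), (((defect S.γ (S.e j) : ℝ) : ℂ))⁻¹ := by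
  rw [← S.evalZero_φr_e, Equiv.apply_symm_apply]

/-- for every `σ ∈ F_d^+`, `φ^#_σ(0) = ∏_{τ ⪯ σ} d_τ⁻¹`, the product over all
words `τ ⪯ σ` in the shortlex order (enumerated by `e`). -/
theorem reverse_poly_at_zero {d : ℕ} (hd : 1 ≤ d) (S : SzegoSystem d) (σ : List (Fin d)) :
    evalZero d (S.φr σ) =
      ∏ j ∈ Finset.range (S.e.symm σ + 1), (((defect S.γ (S.e j) : ℝ) : ℂ))⁻¹ :=
  reverse_poly_at_zero_general S σ
end

section
/- Given a Szegő system, fix m ≥ 1 and d-tuples Z = (Z_1,…,Z_d) and W = (W_1,…,W_d) of m×m complex matrices. Then for every generator k ∈ {1,…,d} and every word σ ∈ F_d^+: φ^#_{kσ}(Z)^* φ^#_{kσ}(W) − φ_{kσ}(Z)^* φ_{kσ}(W) = φ^#_{kσ−1}(Z)^* φ^#_{kσ−1}(W) − φ_σ(Z)^* Z_k^* W_k φ_σ(W). -/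
open scoped BigOperators ComplexOrder

/-- Evaluation of a noncommutative polynomial at a `d`-tuple of `m×m` matrices. -/
noncomputable def evalM {d m : ℕ} (A : Fin d → Matrix (Fin m) (Fin m) ℂ) :
    FreeAlgebra ℂ (Fin d) →ₐ[ℂ] Matrix (Fin m) (Fin m) ℂ :=
  FreeAlgebra.lift ℂ A

/-! The Szegő recurrence sends `(Z_k φ_σ, φ^#_{kσ-1})` to `(φ_{kσ}, φ^#_{kσ})` by the matrix
`d⁻¹ [[1, -γ], [-γ̄, 1]]`, and a matrix of this shape rescales the indefinite form
`(x, u), (y, v) ↦ u^* v - x^* y` by `d⁻² (1 - |γ|²) = 1`. -/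

section StarAlgebra

variable {A : Type*} [Ring A] [StarRing A] [Algebra ℂ A] [StarModule ℂ A]

theorem szego_step_star_mul_sub_star_mul (a : ℂ) (x y u v : A) :
    star ((-(starRingEnd ℂ a)) • x + u) * ((-(starRingEnd ℂ a)) • y + v) -
        star (x - a • u) * (y - a • v) =
      ((1 - ‖a‖ ^ 2 : ℝ) : ℂ) • (star u * v - star x * y) := by
  have hnorm : ((1 - ‖a‖ ^ 2 : ℝ) : ℂ) = 1 - starRingEnd ℂ a * a := by
    rw [mul_comm, Complex.mul_conj, Complex.normSq_eq_norm_sq]; push_cast; rfl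
  rw [hnorm]
  simp only [star_smul, star_add, star_sub, star_neg, smul_mul_assoc, mul_smul_comm, add_mul,
    mul_add, sub_mul, mul_sub, neg_smul, smul_smul, neg_mul, mul_neg, smul_sub]
  match_scalars <;> simp only [← starRingEnd_apply, starRingEnd_self_apply] <;> ring

theorem star_ofReal_smul_mul_ofReal_smul (c : ℝ) (x y : A) :
    star ((c : ℂ) • x) * ((c : ℂ) • y) = ((c ^ 2 : ℝ) : ℂ) • (star x * y) := by
  rw [star_smul, Complex.star_def, Complex.conj_ofReal, smul_mul_smul_comm]
  push_cast; ring_nf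

end StarAlgebra

theorem inv_defect_sq_mul {d : ℕ} {γ : List (Fin d) → ℂ} {σ : List (Fin d)} (h : ‖γ σ‖ < 1) :
    (defect γ σ)⁻¹ ^ 2 * (1 - ‖γ σ‖ ^ 2) = 1 := by
  have hpos : 0 < 1 - ‖γ σ‖ ^ 2 := by nlinarith [norm_nonneg (γ σ)]
  rw [defect, inv_pow, Real.sq_sqrt hpos.le, inv_mul_cancel₀ hpos.ne']

namespace SzegoSystem

variable {d m : ℕ} (S : SzegoSystem d) (Z : Fin d → Matrix (Fin m) (Fin m) ℂ)

theorem evalM_φ_cons (k : Fin d) (σ : List (Fin d)) :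
    evalM Z (S.φ (k :: σ)) = (((defect S.γ (k :: σ))⁻¹ : ℝ) : ℂ) •
      (Z k * evalM Z (S.φ σ) - S.γ (k :: σ) • evalM Z (S.φr (S.e (S.e.symm (k :: σ) - 1)))) := by
  rw [S.recφ, Complex.ofReal_inv, map_smul, map_sub, map_mul, map_smul, evalM,
    FreeAlgebra.lift_ι_apply]

theorem evalM_φr_cons (k : Fin d) (σ : List (Fin d)) :
    evalM Z (S.φr (k :: σ)) = (((defect S.γ (k :: σ))⁻¹ : ℝ) : ℂ) •
      ((-(starRingEnd ℂ (S.γ (k :: σ)))) • (Z k * evalM Z (S.φ σ)) +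
        evalM Z (S.φr (S.e (S.e.symm (k :: σ) - 1)))) := by
  rw [S.recφr, Complex.ofReal_inv, map_smul, map_add, map_smul, map_mul, evalM,
    FreeAlgebra.lift_ι_apply]

end SzegoSystem

theorem szego_cd_step_general {d m : ℕ} (S : SzegoSystem d)
    (Z W : Fin d → Matrix (Fin m) (Fin m) ℂ) (k : Fin d) (σ : List (Fin d)) :
    star (evalM Z (S.φr (k :: σ))) * evalM W (S.φr (k :: σ)) -
        star (evalM Z (S.φ (k :: σ))) * evalM W (S.φ (k :: σ)) =
      star (evalM Z (S.φr (S.e (S.e.symm (k :: σ) - 1)))) *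
          evalM W (S.φr (S.e (S.e.symm (k :: σ) - 1))) -
        star (evalM Z (S.φ σ)) * (star (Z k) * W k) * evalM W (S.φ σ) := by
  rw [S.evalM_φr_cons, S.evalM_φr_cons, S.evalM_φ_cons, S.evalM_φ_cons,
    star_ofReal_smul_mul_ofReal_smul, star_ofReal_smul_mul_ofReal_smul, ← smul_sub,
    szego_step_star_mul_sub_star_mul, smul_smul, ← Complex.ofReal_mul,
    inv_defect_sq_mul (S.hγlt _), Complex.ofReal_one, one_smul, star_mul, mul_assoc, mul_assoc,
    mul_assoc]

/-- for any `d`-tuples `Z, W` of `m×m` matrices, any generator `k` and word `σ`,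
`φ^#_{kσ}(Z)^* φ^#_{kσ}(W) − φ_{kσ}(Z)^* φ_{kσ}(W)
  = φ^#_{kσ−1}(Z)^* φ^#_{kσ−1}(W) − φ_σ(Z)^* Z_k^* W_k φ_σ(W)`. -/
theorem szego_cd_step {d m : ℕ} (hd : 1 ≤ d) (hm : 1 ≤ m) (S : SzegoSystem d)
    (Z W : Fin d → Matrix (Fin m) (Fin m) ℂ) (k : Fin d) (σ : List (Fin d)) :
    star (evalM Z (S.φr (k :: σ))) * evalM W (S.φr (k :: σ)) -
        star (evalM Z (S.φ (k :: σ))) * evalM W (S.φ (k :: σ)) =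
      star (evalM Z (S.φr (S.e (S.e.symm (k :: σ) - 1)))) *
          evalM W (S.φr (S.e (S.e.symm (k :: σ) - 1))) -
        star (evalM Z (S.φ σ)) * (star (Z k) * W k) * evalM W (S.φ σ) :=
  szego_cd_step_general S Z W k σ
end

section
/- Given a Szegő system, fix m ≥ 1, a d-tuple Z = (Z_1,…,Z_d) of m×m complex matrices and an integer n ≥ 1, and write Z^* := (Z_1^*,…,Z_d^*). Then: φ^#_{σ(n)}(Z^*)^* φ^#_{σ(n)}(Z^*) = ∑_{σ : |σ| = n} φ_σ(Z^*)^* φ_σ(Z^*) + (I_m − ∑_{k=1}^d Z_k Z_k^*) + ∑_{σ : 1 ≤ |σ| ≤ n−1} φ_σ(Z^*)^* (I_m − ∑_{k=1}^d Z_k Z_k^*) φ_σ(Z^*). -/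
open scoped BigOperators ComplexOrder

/-! The Szegő recurrences send the pair `(Z_k φ_σ, φ^#_{kσ-1})` to `(φ_{kσ}, φ^#_{kσ})` by the
matrix `d_{kσ}⁻¹ [[1, -γ], [-γ̄, 1]]`, which preserves the indefinite form `|A|² - |B|²`. Evaluated
at a tuple `W`, this gives
`φ_{kσ}^* φ_{kσ} - φ^#_{kσ}^* φ^#_{kσ} = φ_σ^* W_k^* W_k φ_σ - φ^#_{kσ-1}^* φ^#_{kσ-1}`.
The words of length `n + 1` form the shortlex interval `(σ(n), σ(n+1)]`, so summing over them
makes the `φ^#` terms telescope to `φ^#_{σ(n+1)}^* φ^#_{σ(n+1)} - φ^#_{σ(n)}^* φ^#_{σ(n)}`;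
induction on `n` and `W = Z^*` give the identity. -/

open scoped ComplexConjugate

theorem star_mul_self_sub_star_mul_self_hyperbolic {R : Type*} [Ring R] [StarRing R]
    [Algebra ℂ R] [StarModule ℂ R] (A B : R) (g : ℂ) :
    star (A - g • B) * (A - g • B) - star (-(conj g) • A + B) * (-(conj g) • A + B) =
      (1 - g * conj g) • (star A * A - star B * B) := by
  simp only [star_sub, star_add, star_smul, star_neg, sub_mul, mul_sub, add_mul, mul_add,
    smul_mul_assoc, mul_smul_comm, smul_smul, neg_mul, mul_neg, neg_smul, smul_sub,
    Complex.star_def, Complex.conj_conj]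
  match_scalars <;> ring

theorem eq_replicate_or_lex_replicate {α : Type*} [LinearOrder α] (top : α)
    (htop : ∀ a, a ≤ top) (l : List α) :
    l = List.replicate l.length top ∨ List.Lex (· < ·) l (List.replicate l.length top) := by
  induction l with
  | nil => exact Or.inl rfl
  | cons a l ih =>
    rw [List.length_cons, List.replicate_succ]
    rcases (htop a).lt_or_eq with ha | rfl
    · exact Or.inr (List.Lex.rel ha)
    · exact ih.imp (congrArg _) List.Lex.cons

theorem shortlexLE_sigmaWord_iff {d : ℕ} (hd : 1 ≤ d) (τ : List (Fin d)) (n : ℕ) :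
    ShortlexLE τ (sigmaWord d hd n) ↔ τ.length ≤ n := by
  rw [ShortlexLE, sigmaWord, List.length_replicate]
  refine ⟨by rintro (h | ⟨h, -⟩) <;> omega, fun h => h.lt_or_eq.imp id fun h => ⟨h, ?_⟩⟩
  subst h
  exact eq_replicate_or_lex_replicate _ (fun a => Fin.le_def.2 (Nat.le_sub_one_of_lt a.isLt)) τ

section Sandwich

variable {d : ℕ} {R : Type*} [Ring R] [StarRing R] [Algebra ℂ R]

noncomputable def sandwich (W : Fin d → R) (p : FreeAlgebra ℂ (Fin d)) (X : R) : R :=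
  star (FreeAlgebra.lift ℂ W p) * X * FreeAlgebra.lift ℂ W p

variable (W : Fin d → R)

theorem sandwich_sub (p : FreeAlgebra ℂ (Fin d)) (X Y : R) :
    sandwich W p (X - Y) = sandwich W p X - sandwich W p Y := by
  simp only [sandwich, mul_sub, sub_mul]

theorem sandwich_sum {ι : Type*} (s : Finset ι) (p : FreeAlgebra ℂ (Fin d)) (X : ι → R) :
    sandwich W p (∑ i ∈ s, X i) = ∑ i ∈ s, sandwich W p (X i) := by
  simp only [sandwich, Finset.mul_sum, Finset.sum_mul]

@[simp]
theorem sandwich_one_left (X : R) : sandwich W 1 X = X := by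
  simp [sandwich]

end Sandwich

theorem sum_ofFn_succ_eq_sum_cons {α M : Type*} [Fintype α] [AddCommMonoid M]
    (G : List α → M) (n : ℕ) :
    ∑ f : Fin (n + 1) → α, G (List.ofFn f) = ∑ a, ∑ f : Fin n → α, G (a :: List.ofFn f) := by
  rw [← (Fin.consEquiv fun _ => α).sum_comp, Fintype.sum_prod_type]
  simp [Fin.consEquiv, List.ofFn_succ]

namespace SzegoSystem

variable {d : ℕ} (S : SzegoSystem d)

theorem defect_sq (σ : List (Fin d)) : defect S.γ σ ^ 2 = 1 - ‖S.γ σ‖ ^ 2 :=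
  Real.sq_sqrt (by nlinarith [S.hγlt σ, norm_nonneg (S.γ σ)])

theorem defect_pos (σ : List (Fin d)) : 0 < defect S.γ σ :=
  Real.sqrt_pos.2 (by nlinarith [S.hγlt σ, norm_nonneg (S.γ σ)])

theorem symm_le_symm_sigmaWord_iff (hd : 1 ≤ d) (τ : List (Fin d)) (n : ℕ) :
    S.e.symm τ ≤ S.e.symm (sigmaWord d hd n) ↔ τ.length ≤ n := by
  rw [S.he, S.e.apply_symm_apply, S.e.apply_symm_apply, shortlexLE_sigmaWord_iff]

theorem sum_ofFn_eq_sum_Ico {M : Type*} [AddCommMonoid M] (hd : 1 ≤ d) (G : List (Fin d) → M)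
    (n : ℕ) :
    ∑ f : Fin (n + 1) → Fin d, G (List.ofFn f) =
      ∑ j ∈ Finset.Ico (S.e.symm (sigmaWord d hd n)) (S.e.symm (sigmaWord d hd (n + 1))),
        G (S.e (j + 1)) := by
  have hmem (τ : List (Fin d)) : τ.length = n + 1 ↔
      S.e.symm (sigmaWord d hd n) < S.e.symm τ ∧ S.e.symm τ ≤ S.e.symm (sigmaWord d hd (n + 1)) := by
    rw [← not_le, S.symm_le_symm_sigmaWord_iff, S.symm_le_symm_sigmaWord_iff]
    omega
  refine Finset.sum_bij (fun f _ => S.e.symm (List.ofFn f) - 1) (fun f _ => ?_)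
    (fun f _ g _ hfg => ?_) (fun j hj => ?_) (fun f _ => ?_)
  · have := (hmem (List.ofFn f)).1 (List.length_ofFn)
    rw [Finset.mem_Ico]
    omega
  · have := (hmem (List.ofFn f)).1 (List.length_ofFn)
    have := (hmem (List.ofFn g)).1 (List.length_ofFn)
    exact List.ofFn_injective (S.e.symm.injective (by omega))
  · rw [Finset.mem_Ico] at hj
    have hlen := (hmem (S.e (j + 1))).2 (by rw [S.e.symm_apply_apply]; omega)
    refine ⟨fun i => (S.e (j + 1))[(i : ℕ)], Finset.mem_univ _, ?_⟩
    rw [show List.ofFn (fun i : Fin (n + 1) => (S.e (j + 1))[(i : ℕ)]) = S.e (j + 1) from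
      List.ext_getElem (by simp [hlen]) (by simp only [List.getElem_ofFn, implies_true]),
      S.e.symm_apply_apply, Nat.add_sub_cancel]
  · have := (hmem (List.ofFn f)).1 (List.length_ofFn)
    rw [Nat.sub_add_cancel (by omega), S.e.apply_symm_apply]

variable {R : Type*} [Ring R] [StarRing R] [Algebra ℂ R] [StarModule ℂ R] (W : Fin d → R)

theorem sandwich_φ_cons_sub_sandwich_φr_cons (k : Fin d) (σ : List (Fin d)) :
    sandwich W (S.φ (k :: σ)) 1 - sandwich W (S.φr (k :: σ)) 1 =
      sandwich W (S.φ σ) (star (W k) * W k) -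
        sandwich W (S.φr (S.e (S.e.symm (k :: σ) - 1))) 1 := by
  set g := S.γ (k :: σ)
  set c : ℂ := ((defect S.γ (k :: σ) : ℝ) : ℂ)
  have hc : (c⁻¹ * c⁻¹) * (1 - g * conj g) = 1 := by
    have hc0 : c ≠ 0 := Complex.ofReal_ne_zero.2 (S.defect_pos _).ne'
    have hc2 : c * c = 1 - g * conj g := by
      rw [Complex.mul_conj', ← Complex.ofReal_mul, ← sq, S.defect_sq]
      push_cast
      ring
    rw [← hc2]
    field_simp
  rw [S.recφ, S.recφr]
  simp only [sandwich, map_smul, map_sub, map_add, map_mul, mul_one, star_smul,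
    smul_mul_smul_comm, ← smul_sub, Complex.star_def, Complex.conj_ofReal, map_inv₀]
  rw [star_mul_self_sub_star_mul_self_hyperbolic, smul_smul, hc, one_smul]
  simp only [FreeAlgebra.lift_ι_apply, star_mul, mul_assoc]

theorem sandwich_φr_sigmaWord_succ (hd : 1 ≤ d) (n : ℕ) :
    sandwich W (S.φr (sigmaWord d hd (n + 1))) 1 =
      sandwich W (S.φr (sigmaWord d hd n)) 1 +
          ∑ f : Fin (n + 1) → Fin d, sandwich W (S.φ (List.ofFn f)) 1 -
        ∑ f : Fin n → Fin d, sandwich W (S.φ (List.ofFn f)) (∑ k, star (W k) * W k) := by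
  set D : List (Fin d) → R := fun τ =>
    sandwich W (S.φr τ) 1 - sandwich W (S.φr (S.e (S.e.symm τ - 1))) 1
  have htelescope : ∑ f : Fin (n + 1) → Fin d, D (List.ofFn f) =
      sandwich W (S.φr (sigmaWord d hd (n + 1))) 1 - sandwich W (S.φr (sigmaWord d hd n)) 1 := by
    have hle : S.e.symm (sigmaWord d hd n) ≤ S.e.symm (sigmaWord d hd (n + 1)) := by
      rw [S.symm_le_symm_sigmaWord_iff, sigmaWord, List.length_replicate]
      exact n.le_succ
    rw [S.sum_ofFn_eq_sum_Ico hd D]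
    simp only [D, S.e.symm_apply_apply, Nat.add_sub_cancel]
    rw [Finset.sum_Ico_sub (fun j => sandwich W (S.φr (S.e j)) 1) hle]
    simp only [S.e.apply_symm_apply]
  have hcons : ∑ f : Fin (n + 1) → Fin d, (sandwich W (S.φ (List.ofFn f)) 1 - D (List.ofFn f)) =
      ∑ f : Fin n → Fin d, sandwich W (S.φ (List.ofFn f)) (∑ k, star (W k) * W k) := by
    rw [sum_ofFn_succ_eq_sum_cons (fun τ => sandwich W (S.φ τ) 1 - D τ), Finset.sum_comm]
    refine Finset.sum_congr rfl fun f _ => ?_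
    rw [sandwich_sum]
    refine Finset.sum_congr rfl fun k _ => ?_
    rw [sub_sub_eq_add_sub, add_sub_right_comm, S.sandwich_φ_cons_sub_sandwich_φr_cons,
      sub_add_cancel]
  rw [← hcons, Finset.sum_sub_distrib, htelescope]
  abel

theorem sandwich_φr_sigmaWord (hd : 1 ≤ d) {n : ℕ} (hn : 1 ≤ n) :
    sandwich W (S.φr (sigmaWord d hd n)) 1 =
      ∑ f : Fin n → Fin d, sandwich W (S.φ (List.ofFn f)) 1 + (1 - ∑ k, star (W k) * W k) +
        ∑ l ∈ Finset.Ico 1 n, ∑ f : Fin l → Fin d,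
          sandwich W (S.φ (List.ofFn f)) (1 - ∑ k, star (W k) * W k) := by
  induction n, hn using Nat.le_induction with
  | base =>
    rw [S.sandwich_φr_sigmaWord_succ W hd 0]
    simp only [sigmaWord, List.replicate_zero, List.ofFn_zero, S.hφr0, S.hφ0, sandwich_one_left,
      Fintype.sum_unique, Finset.Ico_self, Finset.sum_empty, add_zero]
    abel
  | succ n hn ih =>
    rw [S.sandwich_φr_sigmaWord_succ W hd n, ih, Finset.sum_Ico_succ_top hn]
    simp only [sandwich_sub, Finset.sum_sub_distrib]
    abel

end SzegoSystem

theorem szego_reverse_identity_general {d m : ℕ} (hd : 1 ≤ d) (S : SzegoSystem d)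
    (Z : Fin d → Matrix (Fin m) (Fin m) ℂ) (n : ℕ) (hn : 1 ≤ n) :
    star (evalM (fun j => star (Z j)) (S.φr (sigmaWord d hd n))) *
        evalM (fun j => star (Z j)) (S.φr (sigmaWord d hd n)) =
      (∑ f : Fin n → Fin d,
          star (evalM (fun j => star (Z j)) (S.φ (List.ofFn f))) *
            evalM (fun j => star (Z j)) (S.φ (List.ofFn f))) +
        (1 - ∑ k : Fin d, Z k * star (Z k)) +
        ∑ l ∈ Finset.Ico 1 n, ∑ f : Fin l → Fin d,
          star (evalM (fun j => star (Z j)) (S.φ (List.ofFn f))) *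
            (1 - ∑ k : Fin d, Z k * star (Z k)) *
            evalM (fun j => star (Z j)) (S.φ (List.ofFn f)) := by
  simpa only [evalM, sandwich, mul_one, star_star] using
    S.sandwich_φr_sigmaWord (fun j => star (Z j)) hd hn

/-- for `n ≥ 1` and a `d`-tuple `Z` of `m×m` matrices, writing
`Z^* := (Z_1^*,…,Z_d^*)`,
`φ^#_{σ(n)}(Z^*)^* φ^#_{σ(n)}(Z^*) = ∑_{|σ| = n} φ_σ(Z^*)^* φ_σ(Z^*)
  + (I − ∑_k Z_k Z_k^*) + ∑_{1 ≤ |σ| ≤ n−1} φ_σ(Z^*)^* (I − ∑_k Z_k Z_k^*) φ_σ(Z^*)`. -/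
theorem szego_reverse_identity {d m : ℕ} (hd : 1 ≤ d) (hm : 1 ≤ m) (S : SzegoSystem d)
    (Z : Fin d → Matrix (Fin m) (Fin m) ℂ) (n : ℕ) (hn : 1 ≤ n) :
    star (evalM (fun j => star (Z j)) (S.φr (sigmaWord d hd n))) *
        evalM (fun j => star (Z j)) (S.φr (sigmaWord d hd n)) =
      (∑ f : Fin n → Fin d,
          star (evalM (fun j => star (Z j)) (S.φ (List.ofFn f))) *
            evalM (fun j => star (Z j)) (S.φ (List.ofFn f))) +
        (1 - ∑ k : Fin d, Z k * star (Z k)) +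
        ∑ l ∈ Finset.Ico 1 n, ∑ f : Fin l → Fin d,
          star (evalM (fun j => star (Z j)) (S.φ (List.ofFn f))) *
            (1 - ∑ k : Fin d, Z k * star (Z k)) *
            evalM (fun j => star (Z j)) (S.φ (List.ofFn f)) :=
  szego_reverse_identity_general hd S Z n hn
end

section
/- Given a Szegő system, fix n ∈ ℕ and let Z = (Z_1,…,Z_d) be a d-tuple of m×m complex matrices with Z_1 Z_1^* + ⋯ + Z_d Z_d^* = I_m (a row co-isometry, i.e. Z lies in the distinguished boundary of the row-ball). Then, with Z^* := (Z_1^*,…,Z_d^*): φ^#_{σ(n)}(Z^*)^* φ^#_{σ(n)}(Z^*) = ∑_{σ : |σ| = n} φ_σ(Z^*)^* φ_σ(Z^*), and this matrix is non-singular; in particular det φ^#_{σ(n)}(Z^*) ≠ 0. -/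
open scoped BigOperators ComplexOrder

/-!
Write `Φ_τ = φ_τ(A)` and `Ψ_τ = φ^#_τ(A)` at `A = Z^*`, so that `∑_k A_k^* A_k = I`. Each Szegő
step `(A_k Φ_σ, Ψ_{kσ-1}) ↦ (Φ_{kσ}, Ψ_{kσ})` is a `J`-unitary `2 × 2` matrix, whence
`Ψ_{kσ}^* Ψ_{kσ} + (A_k Φ_σ)^* (A_k Φ_σ) = Ψ_{kσ-1}^* Ψ_{kσ-1} + Φ_{kσ}^* Φ_{kσ}`.
The words of length `n + 1` form the shortlex interval `(σ(n), σ(n+1)]`, so summing over it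
telescopes, and `∑_k A_k^* A_k = I` turns the `A_k Φ_σ` terms into the Gram sum of level `n`.

If `Ψ_{σ(n+1)} v = 0`, the identity gives `Φ_τ v = 0` for all `|τ| = n + 1`, and the inverse step
`d_τ Ψ_{τ-1} = conj γ_τ Φ_τ + Ψ_τ` carries `Ψ_τ v = 0` down the interval to `Ψ_{σ(n)} v = 0`;
by induction `v = 0`, since `Ψ_∅ = I`.
-/

open Finset Matrix

lemma List.eq_or_lex_replicate_of_forall_le {α : Type*} [LinearOrder α] {t : α}
    (ht : ∀ a, a ≤ t) :
    ∀ {σ : List α} {L : ℕ}, σ.length = L →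
      σ = List.replicate L t ∨ List.Lex (· < ·) σ (List.replicate L t)
  | [], _, rfl => Or.inl rfl
  | a :: σ, L + 1, hL => by
    rw [List.replicate_succ]
    rcases (ht a).lt_or_eq with hat | rfl
    · exact Or.inr (List.Lex.rel hat)
    · rcases eq_or_lex_replicate_of_forall_le ht (L := L) (by simpa using hL) with h | h
      · exact Or.inl (h ▸ rfl)
      · exact Or.inr (List.Lex.cons h)

lemma List.exists_ofFn_eq {α : Type*} {l : List α} {n : ℕ} (hl : l.length = n) :
    ∃ f : Fin n → α, List.ofFn f = l := by
  subst hl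
  exact ⟨l.get, List.ofFn_get l⟩

lemma List.sum_ofFn_succ {α M : Type*} [Fintype α] [AddCommMonoid M] (g : List α → M)
    (n : ℕ) :
    ∑ f : Fin (n + 1) → α, g (List.ofFn f) = ∑ k : α, ∑ f : Fin n → α, g (k :: List.ofFn f) := by
  rw [← (Fin.consEquiv fun _ => α).sum_comp, Fintype.sum_prod_type]
  simp [Fin.consEquiv, List.ofFn_succ]

lemma Finset.add_sum_Ioc_eq_add_sum_Ioc {M : Type*} [AddCommMonoid M] {f g h : ℕ → M}
    {a b : ℕ} (hab : a ≤ b) (step : ∀ N ∈ Ioc a b, f N + g N = f (N - 1) + h N) :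
    f b + ∑ N ∈ Ioc a b, g N = f a + ∑ N ∈ Ioc a b, h N := by
  induction b, hab using Nat.le_induction with
  | base => simp
  | succ b hab ih =>
    have hstep : f (b + 1) + g (b + 1) = f b + h (b + 1) :=
      step (b + 1) (mem_Ioc.mpr ⟨by omega, le_rfl⟩)
    calc f (b + 1) + ∑ N ∈ Ioc a (b + 1), g N
        = f (b + 1) + g (b + 1) + ∑ N ∈ Ioc a b, g N := by rw [sum_Ioc_succ_top hab]; abel
      _ = f b + ∑ N ∈ Ioc a b, g N + h (b + 1) := by rw [hstep]; abel
      _ = f a + ∑ N ∈ Ioc a (b + 1), h N := by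
        rw [ih fun N hN => step N (Ioc_subset_Ioc_right (by omega) hN), sum_Ioc_succ_top hab,
          add_assoc]

lemma ShortlexLE.length_le {d : ℕ} {σ τ : List (Fin d)} (h : ShortlexLE σ τ) :
    σ.length ≤ τ.length := by
  rcases h with h | ⟨h, -⟩ <;> omega

lemma shortlexLE_sigmaWord_of_length_le {d : ℕ} (hd : 1 ≤ d) {σ : List (Fin d)} {L : ℕ}
    (hL : σ.length ≤ L) : ShortlexLE σ (sigmaWord d hd L) := by
  rcases hL.lt_or_eq with hL | hL
  · exact Or.inl (by simpa [sigmaWord] using hL)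
  · refine Or.inr ⟨by simp [sigmaWord, hL], List.eq_or_lex_replicate_of_forall_le ?_ hL⟩
    exact fun a => Fin.le_def.mpr (Nat.le_sub_one_of_lt a.isLt)

/-- `(F, Q) = c⁻¹ [[1, -g], [-conj g, 1]] (X, P)` with `c² = 1 - |g|²`: one step of the
Szegő recursion, a `J`-unitary map. -/
structure IsSzegoStep {R : Type*} [Ring R] [Algebra ℂ R] (c : ℝ) (g : ℂ) (X P F Q : R) :
    Prop where
  sq_eq : c ^ 2 = 1 - ‖g‖ ^ 2
  ne_zero : c ≠ 0
  smul_fst : (c : ℂ) • F = X - g • P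
  smul_snd : (c : ℂ) • Q = -(starRingEnd ℂ g) • X + P

namespace IsSzegoStep

variable {R : Type*} [Ring R] [Algebra ℂ R] {c : ℝ} {g : ℂ} {X P F Q : R}

lemma ofReal_sq_eq (h : IsSzegoStep c g X P F Q) : (c : ℂ) ^ 2 = 1 - starRingEnd ℂ g * g := by
  rw [← Complex.ofReal_pow, h.sq_eq, Complex.ofReal_sub, Complex.ofReal_one, Complex.ofReal_pow,
    ← Complex.mul_conj', mul_comm]

lemma smul_prev_eq (h : IsSzegoStep c g X P F Q) : (c : ℂ) • P = starRingEnd ℂ g • F + Q := by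
  have hc : (c : ℂ) ≠ 0 := Complex.ofReal_ne_zero.mpr h.ne_zero
  apply smul_right_injective R hc
  simp only [smul_add, smul_comm (c : ℂ) (starRingEnd ℂ g) F, h.smul_fst, h.smul_snd, smul_smul,
    ← sq, h.ofReal_sq_eq]
  module

lemma star_mul_self_add_star_mul_self [StarRing R] [StarModule ℂ R]
    (h : IsSzegoStep c g X P F Q) : star Q * Q + star X * X = star P * P + star F * F := by
  have hc : (c : ℂ) ^ 2 ≠ 0 := pow_ne_zero 2 (Complex.ofReal_ne_zero.mpr h.ne_zero)
  have gram_smul : ∀ Y : R, (c : ℂ) ^ 2 • (star Y * Y) = star ((c : ℂ) • Y) * ((c : ℂ) • Y) := by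
    intro Y
    rw [star_smul, Complex.star_def, Complex.conj_ofReal, smul_mul_smul_comm, sq]
  apply smul_right_injective R hc
  simp only [smul_add, gram_smul Q, gram_smul F, h.smul_fst, h.smul_snd]
  rw [h.ofReal_sq_eq]
  simp only [star_add, star_sub, star_smul, star_neg, starRingEnd_apply, star_star, add_mul,
    mul_add, sub_mul, mul_sub, smul_mul_assoc, mul_smul_comm]
  module

end IsSzegoStep

lemma Matrix.mulVec_eq_zero_of_sum_conjTranspose_mul_self_mulVec_eq_zero {ι m n : Type*}
    [Fintype m] [Fintype n] {s : Finset ι} {M : ι → Matrix m n ℂ} {v : n → ℂ}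
    (h : (∑ i ∈ s, (M i)ᴴ * M i) *ᵥ v = 0) {i : ι} (hi : i ∈ s) : M i *ᵥ v = 0 := by
  have hform : ∑ j ∈ s, star (M j *ᵥ v) ⬝ᵥ (M j *ᵥ v) = 0 := by
    rw [← dotProduct_zero (star v), ← h, Matrix.sum_mulVec, dotProduct_sum]
    refine sum_congr rfl fun j _ => ?_
    rw [← Matrix.mulVec_mulVec, Matrix.dotProduct_mulVec (star v), ← Matrix.star_mulVec]
  exact dotProduct_star_self_eq_zero.mp
    ((sum_eq_zero_iff_of_nonneg fun j _ => dotProduct_star_self_nonneg _).mp hform i hi)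

namespace SzegoSystem

variable {d m : ℕ} (S : SzegoSystem d) (A : Fin d → Matrix (Fin m) (Fin m) ℂ)

lemma symm_le_symm_iff {σ τ : List (Fin d)} : S.e.symm σ ≤ S.e.symm τ ↔ ShortlexLE σ τ := by
  simpa using S.he (S.e.symm σ) (S.e.symm τ)

lemma le_symm_sigmaWord_iff (hd : 1 ≤ d) {N L : ℕ} :
    N ≤ S.e.symm (sigmaWord d hd L) ↔ (S.e N).length ≤ L := by
  rw [← S.e.symm_apply_apply N, symm_le_symm_iff, Equiv.apply_symm_apply]
  refine ⟨fun h => ?_, shortlexLE_sigmaWord_of_length_le hd⟩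
  simpa [sigmaWord] using h.length_le

lemma mem_Ioc_sigmaWord_iff (hd : 1 ≤ d) {N L : ℕ} :
    N ∈ Ioc (S.e.symm (sigmaWord d hd L)) (S.e.symm (sigmaWord d hd (L + 1))) ↔
      (S.e N).length = L + 1 := by
  rw [mem_Ioc, ← not_le, S.le_symm_sigmaWord_iff, S.le_symm_sigmaWord_iff]
  omega

lemma symm_sigmaWord_le_succ (hd : 1 ≤ d) (L : ℕ) :
    S.e.symm (sigmaWord d hd L) ≤ S.e.symm (sigmaWord d hd (L + 1)) := by
  rw [le_symm_sigmaWord_iff, Equiv.apply_symm_apply]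
  simp [sigmaWord]

lemma ne_nil_of_mem_Ioc_sigmaWord (hd : 1 ≤ d) {N L : ℕ}
    (hN : N ∈ Ioc (S.e.symm (sigmaWord d hd L)) (S.e.symm (sigmaWord d hd (L + 1)))) :
    S.e N ≠ [] := by
  rw [← List.length_pos_iff, (S.mem_Ioc_sigmaWord_iff hd).mp hN]
  exact L.succ_pos

lemma sum_Ioc_sigmaWord {M : Type*} [AddCommMonoid M] (hd : 1 ≤ d) (g : List (Fin d) → M)
    (L : ℕ) :
    ∑ N ∈ Ioc (S.e.symm (sigmaWord d hd L)) (S.e.symm (sigmaWord d hd (L + 1))), g (S.e N) =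
      ∑ f : Fin (L + 1) → Fin d, g (List.ofFn f) := by
  symm
  refine sum_bij (fun f _ => S.e.symm (List.ofFn f)) (fun f _ => ?_)
    (fun f _ f' _ h => List.ofFn_injective (S.e.symm.injective h)) (fun N hN => ?_)
    (fun f _ => by rw [Equiv.apply_symm_apply])
  · rw [mem_Ioc_sigmaWord_iff, Equiv.apply_symm_apply, List.length_ofFn]
  · obtain ⟨f, hf⟩ := List.exists_ofFn_eq ((S.mem_Ioc_sigmaWord_iff hd).mp hN)
    exact ⟨f, mem_univ f, by rw [hf, Equiv.symm_apply_apply]⟩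

/-- The shortlex predecessor `τ - 1`. -/
def pred (τ : List (Fin d)) : List (Fin d) := S.e (S.e.symm τ - 1)

noncomputable def evalφ (σ : List (Fin d)) : Matrix (Fin m) (Fin m) ℂ := evalM A (S.φ σ)

noncomputable def evalφr (σ : List (Fin d)) : Matrix (Fin m) (Fin m) ℂ := evalM A (S.φr σ)

lemma isSzegoStep (k : Fin d) (σ : List (Fin d)) :
    IsSzegoStep (defect S.γ (k :: σ)) (S.γ (k :: σ)) (A k * S.evalφ A σ)
      (S.evalφr A (S.pred (k :: σ))) (S.evalφ A (k :: σ)) (S.evalφr A (k :: σ)) := by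
  have hγ := S.hγlt (k :: σ)
  have hsq : defect S.γ (k :: σ) ^ 2 = 1 - ‖S.γ (k :: σ)‖ ^ 2 :=
    Real.sq_sqrt (by nlinarith [norm_nonneg (S.γ (k :: σ))])
  have hne : defect S.γ (k :: σ) ≠ 0 := by
    rintro h0
    rw [h0] at hsq
    nlinarith [norm_nonneg (S.γ (k :: σ))]
  have hc : ((defect S.γ (k :: σ) : ℝ) : ℂ) ≠ 0 := Complex.ofReal_ne_zero.mpr hne
  refine ⟨hsq, hne, ?_, ?_⟩
  · rw [evalφ, S.recφ, map_smul, smul_inv_smul₀ hc]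
    simp [evalM, evalφ, evalφr, pred]
  · rw [evalφr, S.recφr, map_smul, smul_inv_smul₀ hc]
    simp [evalM, evalφ, evalφr, pred]

noncomputable def shiftGram : List (Fin d) → Matrix (Fin m) (Fin m) ℂ
  | [] => 0
  | k :: σ => star (A k * S.evalφ A σ) * (A k * S.evalφ A σ)

lemma gram_evalφr_add_shiftGram {τ : List (Fin d)} (hτ : τ ≠ []) :
    star (S.evalφr A τ) * S.evalφr A τ + S.shiftGram A τ =
      star (S.evalφr A (S.pred τ)) * S.evalφr A (S.pred τ) + star (S.evalφ A τ) * S.evalφ A τ := by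
  obtain ⟨k, σ, rfl⟩ := List.exists_cons_of_ne_nil hτ
  exact (S.isSzegoStep A k σ).star_mul_self_add_star_mul_self

lemma gram_evalφr_sigmaWord_succ_add (hd : 1 ≤ d) (L : ℕ) :
    star (S.evalφr A (sigmaWord d hd (L + 1))) * S.evalφr A (sigmaWord d hd (L + 1)) +
        ∑ f : Fin (L + 1) → Fin d, S.shiftGram A (List.ofFn f) =
      star (S.evalφr A (sigmaWord d hd L)) * S.evalφr A (sigmaWord d hd L) +
        ∑ f : Fin (L + 1) → Fin d, star (S.evalφ A (List.ofFn f)) * S.evalφ A (List.ofFn f) := by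
  have h := add_sum_Ioc_eq_add_sum_Ioc
    (f := fun N => star (S.evalφr A (S.e N)) * S.evalφr A (S.e N))
    (g := fun N => S.shiftGram A (S.e N))
    (h := fun N => star (S.evalφ A (S.e N)) * S.evalφ A (S.e N))
    (S.symm_sigmaWord_le_succ hd L) fun N hN => by
      simpa only [pred, Equiv.symm_apply_apply] using
        S.gram_evalφr_add_shiftGram A (S.ne_nil_of_mem_Ioc_sigmaWord hd hN)
  rwa [S.sum_Ioc_sigmaWord hd (S.shiftGram A),
    S.sum_Ioc_sigmaWord hd fun τ => star (S.evalφ A τ) * S.evalφ A τ, Equiv.apply_symm_apply,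
    Equiv.apply_symm_apply] at h

lemma sum_shiftGram (hA : ∑ k, star (A k) * A k = 1) (L : ℕ) :
    ∑ f : Fin (L + 1) → Fin d, S.shiftGram A (List.ofFn f) =
      ∑ f : Fin L → Fin d, star (S.evalφ A (List.ofFn f)) * S.evalφ A (List.ofFn f) := by
  rw [List.sum_ofFn_succ, sum_comm]
  refine sum_congr rfl fun f _ => ?_
  have hterm : ∀ k, S.shiftGram A (k :: List.ofFn f) =
      star (S.evalφ A (List.ofFn f)) * (star (A k) * A k) * S.evalφ A (List.ofFn f) := by
    intro k
    simp only [shiftGram, star_mul, mul_assoc]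
  simp only [hterm, ← sum_mul, ← mul_sum, hA, mul_one]

theorem gram_evalφr_sigmaWord (hd : 1 ≤ d) (hA : ∑ k, star (A k) * A k = 1) (n : ℕ) :
    star (S.evalφr A (sigmaWord d hd n)) * S.evalφr A (sigmaWord d hd n) =
      ∑ f : Fin n → Fin d, star (S.evalφ A (List.ofFn f)) * S.evalφ A (List.ofFn f) := by
  induction n with
  | zero => simp [sigmaWord, evalφ, evalφr, S.hφ0, S.hφr0]
  | succ n ih =>
    have h := S.gram_evalφr_sigmaWord_succ_add A hd n
    rw [S.sum_shiftGram A hA, ← ih] at h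
    exact add_left_cancel ((add_comm _ _).trans h)

lemma evalφr_pred_mulVec_eq_zero {τ : List (Fin d)} (hτ : τ ≠ []) {v : Fin m → ℂ}
    (hφ : S.evalφ A τ *ᵥ v = 0) (hφr : S.evalφr A τ *ᵥ v = 0) :
    S.evalφr A (S.pred τ) *ᵥ v = 0 := by
  obtain ⟨k, σ, rfl⟩ := List.exists_cons_of_ne_nil hτ
  have hstep := S.isSzegoStep A k σ
  have h := congrArg (· *ᵥ v) hstep.smul_prev_eq
  simp only [Matrix.smul_mulVec, Matrix.add_mulVec, hφ, hφr, smul_zero, add_zero] at h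
  exact (smul_eq_zero.mp h).resolve_left (Complex.ofReal_ne_zero.mpr hstep.ne_zero)

lemma evalφr_sigmaWord_mulVec_eq_zero_of_succ (hd : 1 ≤ d) (hA : ∑ k, star (A k) * A k = 1)
    {L : ℕ} {v : Fin m → ℂ} (h : S.evalφr A (sigmaWord d hd (L + 1)) *ᵥ v = 0) :
    S.evalφr A (sigmaWord d hd L) *ᵥ v = 0 := by
  set a := S.e.symm (sigmaWord d hd L)
  set b := S.e.symm (sigmaWord d hd (L + 1))
  have hgram : (∑ N ∈ Ioc a b, star (S.evalφ A (S.e N)) * S.evalφ A (S.e N)) *ᵥ v = 0 := by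
    rw [S.sum_Ioc_sigmaWord hd fun τ => star (S.evalφ A τ) * S.evalφ A τ,
      ← S.gram_evalφr_sigmaWord A hd hA, ← Matrix.mulVec_mulVec, h, Matrix.mulVec_zero]
  have hφ : ∀ N ∈ Ioc a b, S.evalφ A (S.e N) *ᵥ v = 0 := fun N hN =>
    mulVec_eq_zero_of_sum_conjTranspose_mul_self_mulVec_eq_zero hgram hN
  have hdown : S.evalφr A (S.e a) *ᵥ v = 0 := by
    refine Nat.decreasingInduction' (P := fun N => S.evalφr A (S.e N) *ᵥ v = 0)
      (fun N hNb haN hsucc => ?_) (S.symm_sigmaWord_le_succ hd L) (by simpa [b] using h)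
    have hN : N + 1 ∈ Ioc a b := mem_Ioc.mpr ⟨by omega, hNb⟩
    simpa [pred] using S.evalφr_pred_mulVec_eq_zero A (S.ne_nil_of_mem_Ioc_sigmaWord hd hN)
      (hφ _ hN) hsucc
  simpa [a] using hdown

lemma det_evalφr_sigmaWord_ne_zero (hd : 1 ≤ d) (hA : ∑ k, star (A k) * A k = 1) (L : ℕ) :
    (S.evalφr A (sigmaWord d hd L)).det ≠ 0 := by
  suffices ∀ v, S.evalφr A (sigmaWord d hd L) *ᵥ v = 0 → v = 0 by
    intro hdet
    obtain ⟨v, hv, hzero⟩ := exists_mulVec_eq_zero_iff.mpr hdet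
    exact hv (this v hzero)
  induction L with
  | zero => simp [sigmaWord, evalφr, S.hφr0]
  | succ L ih => exact fun v hv => ih v (S.evalφr_sigmaWord_mulVec_eq_zero_of_succ A hd hA hv)

end SzegoSystem

theorem boundary_equality_nonsingular_general {d m : ℕ} (hd : 1 ≤ d)
    (S : SzegoSystem d) (n : ℕ) (Z : Fin d → Matrix (Fin m) (Fin m) ℂ)
    (hZ : (∑ k : Fin d, Z k * star (Z k)) = (1 : Matrix (Fin m) (Fin m) ℂ)) :
    star (evalM (fun j => star (Z j)) (S.φr (sigmaWord d hd n))) *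
        evalM (fun j => star (Z j)) (S.φr (sigmaWord d hd n)) =
      (∑ f : Fin n → Fin d,
        star (evalM (fun j => star (Z j)) (S.φ (List.ofFn f))) *
          evalM (fun j => star (Z j)) (S.φ (List.ofFn f))) ∧
    (star (evalM (fun j => star (Z j)) (S.φr (sigmaWord d hd n))) *
        evalM (fun j => star (Z j)) (S.φr (sigmaWord d hd n))).det ≠ 0 ∧
    (evalM (fun j => star (Z j)) (S.φr (sigmaWord d hd n))).det ≠ 0 := by
  have hA : ∑ k, star (star (Z k)) * star (Z k) = 1 := by simpa only [star_star] using hZ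
  have hdet := S.det_evalφr_sigmaWord_ne_zero _ hd hA n
  refine ⟨S.gram_evalφr_sigmaWord _ hd hA n, ?_, hdet⟩
  rw [star_eq_conjTranspose, det_mul, det_conjTranspose]
  exact mul_ne_zero (star_ne_zero.mpr hdet) hdet

/-- if `Z` is a row co-isometry (`∑_k Z_k Z_k^* = I`, the distinguished boundary
of the row-ball), then `φ^#_{σ(n)}(Z^*)^* φ^#_{σ(n)}(Z^*) = ∑_{|σ| = n} φ_σ(Z^*)^* φ_σ(Z^*)`,
and this matrix is non-singular; in particular `det φ^#_{σ(n)}(Z^*) ≠ 0`. -/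
theorem boundary_equality_nonsingular {d m : ℕ} (hd : 1 ≤ d) (hm : 1 ≤ m)
    (S : SzegoSystem d) (n : ℕ) (Z : Fin d → Matrix (Fin m) (Fin m) ℂ)
    (hZ : (∑ k : Fin d, Z k * star (Z k)) = (1 : Matrix (Fin m) (Fin m) ℂ)) :
    star (evalM (fun j => star (Z j)) (S.φr (sigmaWord d hd n))) *
        evalM (fun j => star (Z j)) (S.φr (sigmaWord d hd n)) =
      (∑ f : Fin n → Fin d,
        star (evalM (fun j => star (Z j)) (S.φ (List.ofFn f))) *
          evalM (fun j => star (Z j)) (S.φ (List.ofFn f))) ∧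
    (star (evalM (fun j => star (Z j)) (S.φr (sigmaWord d hd n))) *
        evalM (fun j => star (Z j)) (S.φr (sigmaWord d hd n))).det ≠ 0 ∧
    (evalM (fun j => star (Z j)) (S.φr (sigmaWord d hd n))).det ≠ 0 :=
  boundary_equality_nonsingular_general hd S n Z hZ
end
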